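/- arXiv:0708.1943 — 7 statements merged into one kernel-verified Lean document; each statement's English description precedes it below -/
import Mathlib

section
/- Let G be a finite group and α ∈ Z^2(G,k*). The twisted group algebra k^{α}G admits a Hopf algebra structure over k (with the U_σ as a basis of the underlying algebra) if and only if the class [α] ∈ H^2(G,k*) is trivial. -/
open Coalgebra in
noncomputable instance mycoalg (k : Type) [Field k] (G : Type) [Group G] :
    Coalgebra k (MonoidAlgebra k G) := inferInstance

section Inst
variable (k : Type) [Field k] (G : Type) [Group G]
open Coalgebra

lemma mycounit_single (σ : G) (a : k) :
    counit (R := k) (MonoidAlgebra.single σ a) = a := by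
  simp

lemma mycomul_single (σ : G) (a : k) : comul (R := k) (MonoidAlgebra.single σ a)
    = (MonoidAlgebra.single σ (1:k) : MonoidAlgebra k G) ⊗ₜ[k] MonoidAlgebra.single σ a := by
  simp

noncomputable instance mybialg : Bialgebra k (MonoidAlgebra k G) := inferInstance

noncomputable def myantipode : MonoidAlgebra k G →ₗ[k] MonoidAlgebra k G :=
  HopfAlgebra.antipode k

lemma myantipode_single (σ : G) (a : k) :
    myantipode k G (MonoidAlgebra.single σ a) = MonoidAlgebra.single σ⁻¹ a := by
  simp [myantipode]

lemma algMap_eq (a : k) :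
    algebraMap k (MonoidAlgebra k G) a = MonoidAlgebra.single 1 a := by
  rw [Algebra.algebraMap_eq_smul_one, MonoidAlgebra.one_def, MonoidAlgebra.smul_single, smul_eq_mul, mul_one]

noncomputable instance myhopf : HopfAlgebra k (MonoidAlgebra k G) := inferInstance

end Inst

/-- The data of a `k`-Hopf algebra structure on the twisted group algebra `k^αG`:
a Hopf algebra whose underlying algebra has basis `{U_σ}` with
`U_σ U_τ = α(σ,τ) U_{στ}` and unit `U_1`. -/
structure TwistedGroupHopfData (k : Type) [Field k] (G : Type) [Group G] [Finite G]
    (α : G → G → kˣ) where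
  A : Type
  [ringA : Ring A]
  [hopfA : HopfAlgebra k A]
  U : G → A
  linIndep : LinearIndependent k U
  span_top : Submodule.span k (Set.range U) = ⊤
  one_eq : (1 : A) = U 1
  mul_U : ∀ σ τ : G, U σ * U τ = ((α σ τ : kˣ) : k) • U (σ * τ)

/-- A twisted group algebra `k^αG` admits a Hopf algebra structure over `k` (with the `U_σ`
as a basis of the underlying algebra) if and only if the class `[α] ∈ H²(G,kˣ)` is trivial,
i.e. `α` is a coboundary. -/
theorem hopfSchur_stmt6 (k : Type) [Field k] (G : Type) [Group G] [Finite G]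
    (α : G → G → kˣ)
    (hcocycle : ∀ σ τ ρ : G, α σ τ * α (σ * τ) ρ = α τ ρ * α σ (τ * ρ))
    (hnorm : ∀ σ : G, α σ 1 = 1 ∧ α 1 σ = 1) :
    Nonempty (TwistedGroupHopfData k G α) ↔
      ∃ g : G → kˣ, ∀ σ τ : G, α σ τ = g σ * g τ * (g (σ * τ))⁻¹ := by
  constructor
  · rintro ⟨D⟩
    letI := D.ringA
    letI := D.hopfA
    let ε := Bialgebra.counitAlgHom k D.A
    have key : ∀ σ τ : G, ε (D.U σ) * ε (D.U τ) = ((α σ τ : kˣ) : k) * ε (D.U (σ * τ)) := by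
      intro σ τ
      have h := congrArg ε (D.mul_U σ τ)
      rwa [map_mul, map_smul, smul_eq_mul] at h
    have h1 : ε (D.U 1) = 1 := by rw [← D.one_eq, map_one]
    have hne : ∀ σ, ε (D.U σ) ≠ 0 := by
      intro σ h
      have h2 := key σ σ⁻¹
      rw [h, zero_mul, mul_inv_cancel, h1, mul_one] at h2
      exact Units.ne_zero (α σ σ⁻¹) h2.symm
    refine ⟨fun σ => Units.mk0 (ε (D.U σ)) (hne σ), fun σ τ => ?_⟩
    apply Units.ext
    show ((α σ τ : kˣ) : k) = ε (D.U σ) * ε (D.U τ) * (ε (D.U (σ * τ)))⁻¹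
    rw [key σ τ, mul_inv_cancel_right₀ (hne (σ * τ))]
  · rintro ⟨g, hg⟩
    have hg1 : g 1 = 1 := by
      have h := hg 1 1
      rw [(hnorm 1).1, one_mul, mul_inv_cancel_right] at h
      exact h.symm
    let b : Module.Basis G k (MonoidAlgebra k G) := MonoidAlgebra.basis G k
    let bu := b.unitsSMul g
    have hbu : ∀ σ : G, bu σ = ((g σ : kˣ) : k) • MonoidAlgebra.single σ 1 := by
      intro σ
      rw [Module.Basis.unitsSMul_apply, MonoidAlgebra.basis_apply]
      rfl
    have hmul : ∀ σ τ : G, ((g σ : kˣ) : k) * ((g τ : kˣ) : k)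
        = ((α σ τ : kˣ) : k) * ((g (σ * τ) : kˣ) : k) := by
      intro σ τ
      have h : g σ * g τ = α σ τ * g (σ * τ) := by
        rw [hg σ τ, inv_mul_cancel_right]
      exact_mod_cast congrArg Units.val h
    exact ⟨{
      A := MonoidAlgebra k G
      U := ⇑bu
      linIndep := bu.linearIndependent
      span_top := bu.span_eq
      one_eq := by
        rw [hbu 1, hg1, Units.val_one, one_smul, MonoidAlgebra.one_def]
      mul_U := fun σ τ => by
        rw [hbu σ, hbu τ, hbu (σ * τ), smul_mul_smul, MonoidAlgebra.single_mul_single,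
          mul_one, smul_smul, hmul σ τ] }⟩
end

section
/- Let G be a finite group, k̄ an algebraically closed field of characteristic not dividing m, ζ ∈ k̄ a primitive m-th root of unity, and α ∈ Z^2(G, Z/mZ) a normalized 2-cocycle. Let Ĝ be the central extension with underlying set G × Z/mZ and multiplication (σ,i)(τ,j) = (στ, i+j+α(σ,τ)). Then the k̄-linear map φ : k̄Ĝ → ⊕_{n=0}^{m-1} k̄^{ζ^{α·n}}G given by (σ,i) ↦ Σ_{j=0}^{m-1} ζ^{ij} U^{(j)}_σ is an isomorphism of Hopf algebras, where the target carries the Hopf algebra structure of Theorem 1.2 (with f ≡ 1). -/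
open TensorProduct

/-- The data of the Hopf algebra `A = ⊕_{n=0}^{m-1} k^{αⁿ}G` of Theorem 1.2 (see the file for
Statement 5 for a detailed description of the fields). -/
structure TwistedSumHopfData (k : Type) [Field k] (G : Type) [Group G] [Finite G]
    (m : ℕ) (α : G → G → kˣ) (f : G → kˣ) where
  A : Type
  [ringA : Ring A]
  [hopfA : HopfAlgebra k A]
  U : Fin m → G → A
  linIndep : LinearIndependent k (fun p : Fin m × G => U p.1 p.2)
  span_top : Submodule.span k (Set.range (fun p : Fin m × G => U p.1 p.2)) = ⊤
  one_eq : (1 : A) = ∑ n : Fin m, U n 1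
  mul_same : ∀ (n : Fin m) (σ τ : G),
    U n σ * U n τ = (((α σ τ : kˣ) : k) ^ (n : ℕ)) • U n (σ * τ)
  mul_ne : ∀ (n p : Fin m) (σ τ : G), n ≠ p → U n σ * U p τ = 0
  counit_U : ∀ (n : Fin m) (σ : G),
    Coalgebra.counit (R := k) (U n σ) = if (n : ℕ) = 0 then (1 : k) else 0
  comul_U : ∀ (n : Fin m) (σ : G),
    Coalgebra.comul (R := k) (U n σ) =
      ∑ r : Fin m, ∑ l : Fin m,
        if ((r : ℕ) + (l : ℕ)) % m = (n : ℕ) then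
          (((if (r : ℕ) + (l : ℕ) < m then 1 else (f σ)⁻¹ : kˣ) : k)) •
            (U r σ ⊗ₜ[k] U l σ)
        else 0
  antipode_U_zero : ∀ (n : Fin m) (σ : G), (n : ℕ) = 0 →
    HopfAlgebra.antipode (R := k) (U n σ) = U n σ⁻¹
  antipode_U_pos : ∀ (n : Fin m) (σ : G) (hn : 0 < (n : ℕ)),
    HopfAlgebra.antipode (R := k) (U n σ) =
      ((((α σ σ⁻¹ : kˣ) : k) ^ (n : ℕ)) / ((f σ⁻¹ : kˣ) : k)) •
        U (⟨m - (n : ℕ), by omega⟩ : Fin m) σ⁻¹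
  cocomm : (TensorProduct.comm k A A).toLinearMap ∘ₗ Coalgebra.comul (R := k) (A := A) =
    Coalgebra.comul

attribute [instance] TwistedSumHopfData.ringA TwistedSumHopfData.hopfA

section Aux
variable {kbar : Type} [Field kbar]

lemma aux_pow_mod (m : ℕ) (z : kbar) (hz : z ^ m = 1) {u v : ℕ} (h : u % m = v % m) :
    z ^ u = z ^ v := by
  conv_lhs => rw [← Nat.div_add_mod u m]
  conv_rhs => rw [← Nat.div_add_mod v m]
  simp [pow_add, pow_mul, hz, h]

lemma aux_sum_zmod (m : ℕ) [NeZero m] (y : kbar) :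
    (∑ i : ZMod m, y ^ i.val) = ∑ i ∈ Finset.range m, y ^ i := by
  refine Finset.sum_nbij' (fun i => i.val) (fun i => (i : ZMod m)) ?_ ?_ ?_ ?_ ?_ <;>
    simp +contextual [ZMod.val_lt, ZMod.val_cast_of_lt, Finset.mem_range, Nat.mod_eq_of_lt]

lemma aux_geom_ne (m : ℕ) [NeZero m] (y : kbar) (hy : y ^ m = 1) (h : y ≠ 1) :
    (∑ i : ZMod m, y ^ i.val) = 0 := by
  rw [aux_sum_zmod]
  have h2 := geom_sum_mul y m
  rw [hy, sub_self] at h2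
  rcases mul_eq_zero.mp h2 with h' | h'
  · exact h'
  · exact absurd (sub_eq_zero.mp h') h

lemma aux_geom_one (m : ℕ) [NeZero m] :
    (∑ i : ZMod m, (1:kbar) ^ i.val) = (m : kbar) := by
  simp [ZMod.card]

end Aux

/-- Let `ζ ∈ k̄` be a primitive `m`-th root of unity in an algebraically closed field of
characteristic not dividing `m`, and let `a ∈ Z²(G, ℤ/mℤ)` be a normalized 2-cocycle on the
finite group `G`. For any Hopf algebra `A = ⊕_n k̄^{αⁿ}G` as in Theorem 1.2 (with
`α(σ,τ) = ζ^{a(σ,τ)}` and `f ≡ 1`), the `k̄`-linear map `φ : k̄Ĝ → A`,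
`(σ,i) ↦ Σ_j ζ^{ij} U^{(j)}_σ`, is an isomorphism of Hopf algebras: writing
`g σ i := φ(σ,i)`, the `g σ i` form a basis of `A`, are group-like, send the identity of
`Ĝ` to `1`, and satisfy `g σ i * g τ j = g (στ) (i+j+a(σ,τ))`, the multiplication rule of the
central extension `Ĝ = G × ℤ/mℤ`. -/
theorem hopfSchur_stmt8 (kbar : Type) [Field kbar] [IsAlgClosed kbar]
    (G : Type) [Group G] [Finite G]
    (m : ℕ) (hm : 0 < m) (hchar : ¬ (ringChar kbar ∣ m))
    (ζ : kbarˣ) (hζ : IsPrimitiveRoot ζ m)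
    (a : G → G → ZMod m)
    (hcocycle : ∀ σ τ ρ : G, a σ τ + a (σ * τ) ρ = a τ ρ + a σ (τ * ρ))
    (hnorm : ∀ σ : G, a σ 1 = 0 ∧ a 1 σ = 0)
    (D : TwistedSumHopfData kbar G m (fun σ τ => ζ ^ (a σ τ).val) (fun _ => 1)) :
    ∀ g : G → ZMod m → D.A,
      (∀ σ i, g σ i = ∑ j : Fin m, (((ζ : kbar) ^ (i.val * (j : ℕ))) • D.U j σ)) →
      (∀ σ τ i j, g σ i * g τ j = g (σ * τ) (i + j + a σ τ)) ∧
      (g 1 0 = 1) ∧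
      (∀ σ i, Coalgebra.comul (R := kbar) (g σ i) = g σ i ⊗ₜ[kbar] g σ i) ∧
      (∀ σ i, Coalgebra.counit (R := kbar) (g σ i) = 1) ∧
      LinearIndependent kbar (fun p : G × ZMod m => g p.1 p.2) ∧
      Submodule.span kbar (Set.range (fun p : G × ZMod m => g p.1 p.2)) = ⊤ := by
  
  classical
  intro g hg
  haveI : NeZero m := ⟨hm.ne'⟩
  set z : kbar := (ζ : kbar) with hzdef
  have hz1 : z ^ m = 1 := by
    have h := hζ.pow_eq_one
    have h2 : ((ζ ^ m : kbarˣ) : kbar) = 1 := by rw [h]; rfl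
    simpa using h2
  have hmod : ∀ u v : ℕ, u % m = v % m → z ^ u = z ^ v := fun u v h => aux_pow_mod m z hz1 h
  have hval : ∀ (x y w : ZMod m), ((x+y+w).val) % m = (x.val + y.val + w.val) % m := by
    intro x y w
    have h : (((x+y+w).val : ℕ) : ZMod m) = ((x.val + y.val + w.val : ℕ) : ZMod m) := by
      push_cast
      simp [ZMod.natCast_val, ZMod.cast_id]
    exact (ZMod.natCast_eq_natCast_iff _ _ _).mp h
  have hz0 : z ≠ 0 := Units.ne_zero ζ
  have hprim : IsPrimitiveRoot z m := IsPrimitiveRoot.coe_units_iff.mpr hζ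
  have hmne : (m : kbar) ≠ 0 := fun h => hchar ((ringChar.spec kbar m).mp h)
  have hy1 : ∀ j j0 : Fin m, ((z⁻¹) ^ (j0:ℕ) * z ^ (j:ℕ) = 1) ↔ j = j0 := by
    intro j j0
    constructor
    · intro h
      rw [inv_pow, inv_mul_eq_one₀ (pow_ne_zero _ hz0)] at h
      exact Fin.ext (hprim.pow_inj j.isLt j0.isLt h.symm)
    · rintro rfl
      rw [inv_pow, inv_mul_cancel₀ (pow_ne_zero _ hz0)]
  have hUspan : ∀ (j0 : Fin m) (σ : G),
      D.U j0 σ ∈ Submodule.span kbar (Set.range fun p : G × ZMod m => g p.1 p.2) := by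
    intro j0 σ
    have key : (∑ i : ZMod m, (z⁻¹) ^ (i.val * (j0:ℕ)) • g σ i) = (m : kbar) • D.U j0 σ := by
      simp only [hg, Finset.smul_sum, smul_smul]
      rw [Finset.sum_comm]
      have hterm : ∀ j : Fin m,
          (∑ i : ZMod m, ((z⁻¹) ^ (i.val * (j0:ℕ)) * z ^ (i.val * (j:ℕ))) • D.U j σ)
          = (if j = j0 then (m:kbar) else 0) • D.U j σ := by
        intro j
        rw [← Finset.sum_smul]
        congr 1
        have he : ∀ i : ZMod m, (z⁻¹) ^ (i.val * (j0:ℕ)) * z ^ (i.val * (j:ℕ))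
            = ((z⁻¹) ^ (j0:ℕ) * z ^ (j:ℕ)) ^ i.val := by
          intro i
          rw [mul_pow, ← pow_mul, ← pow_mul, mul_comm (j0:ℕ), mul_comm (j:ℕ)]
        rw [Finset.sum_congr rfl fun i _ => he i]
        by_cases h : j = j0
        · rw [if_pos h, h, inv_pow, inv_mul_cancel₀ (pow_ne_zero _ hz0)]
          exact aux_geom_one m
        · rw [if_neg h]
          refine aux_geom_ne m _ ?_ (fun h1 => h ((hy1 j j0).mp h1))
          rw [mul_pow, ← pow_mul, mul_comm (j0:ℕ) m, pow_mul, inv_pow, hz1, inv_one,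
            one_pow, one_mul, ← pow_mul, mul_comm (j:ℕ) m, pow_mul, hz1, one_pow]
      rw [Finset.sum_congr rfl fun j _ => hterm j]
      simp only [ite_smul, zero_smul]
      rw [Finset.sum_ite_eq' Finset.univ j0]
      simp
    have hrep : D.U j0 σ = (m:kbar)⁻¹ • ∑ i : ZMod m, (z⁻¹) ^ (i.val * (j0:ℕ)) • g σ i := by
      rw [key, smul_smul, inv_mul_cancel₀ hmne, one_smul]
    rw [hrep]
    exact Submodule.smul_mem _ _ (Submodule.sum_mem _ fun i _ => Submodule.smul_mem _ _
      (Submodule.subset_span ⟨(σ, i), rfl⟩))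
  have hspan : Submodule.span kbar (Set.range fun p : G × ZMod m => g p.1 p.2) = ⊤ := by
    rw [eq_top_iff, ← D.span_top, Submodule.span_le]
    rintro x ⟨p, rfl⟩
    exact hUspan p.1 p.2
  haveI : Fintype G := Fintype.ofFinite G
  have hcard : Fintype.card (G × ZMod m) = Module.finrank kbar D.A := by
    rw [Module.finrank_eq_card_basis (Module.Basis.mk D.linIndep (le_of_eq D.span_top.symm))]
    simp [ZMod.card, mul_comm]
  refine ⟨?_, ?_, ?_, ?_, ?_, ?_⟩
  · -- multiplication
    intro σ τ i j
    rw [hg, hg, hg, Finset.sum_mul_sum]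
    refine Finset.sum_congr rfl fun n _ => ?_
    rw [Finset.sum_eq_single n (fun p _ hp => by
          rw [smul_mul_smul_comm, D.mul_ne n p σ τ (Ne.symm hp), smul_zero])
        (fun h => absurd (Finset.mem_univ n) h)]
    rw [smul_mul_smul_comm, D.mul_same, smul_smul]
    congr 1
    rw [Units.val_pow_eq_pow_val, ← pow_mul, ← pow_add, ← pow_add]
    refine hmod _ _ ?_
    conv_lhs => rw [← add_mul, ← add_mul]
    rw [Nat.mul_mod, Nat.mul_mod ((i+j+a σ τ).val), hval]
  · -- unit
    rw [hg]
    simp [D.one_eq]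
  · -- comul
    intro σ i
    rw [hg]
    have hrhs : ((∑ j : Fin m, z ^ (i.val * (j:ℕ)) • D.U j σ) ⊗ₜ[kbar]
          (∑ j : Fin m, z ^ (i.val * (j:ℕ)) • D.U j σ))
        = ∑ r : Fin m, ∑ l : Fin m,
            z ^ (i.val * ((r:ℕ)+(l:ℕ))) • (D.U r σ ⊗ₜ[kbar] D.U l σ) := by
      rw [TensorProduct.sum_tmul]
      refine Finset.sum_congr rfl fun r _ => ?_
      rw [TensorProduct.tmul_sum]
      refine Finset.sum_congr rfl fun l _ => ?_
      rw [TensorProduct.tmul_smul, TensorProduct.smul_tmul', smul_smul]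
      congr 1
      rw [← pow_add, mul_add, add_comm (i.val * (r:ℕ))]
    have hlhs : (Coalgebra.comul (R := kbar) (∑ j : Fin m, z ^ (i.val * (j:ℕ)) • D.U j σ))
        = ∑ r : Fin m, ∑ l : Fin m,
            z ^ (i.val * ((r:ℕ)+(l:ℕ))) • (D.U r σ ⊗ₜ[kbar] D.U l σ) := by
      rw [map_sum]
      simp only [map_smul, D.comul_U, inv_one, ite_self, Units.val_one, one_smul,
        Finset.smul_sum]
      rw [Finset.sum_comm]
      refine Finset.sum_congr rfl fun r _ => ?_
      rw [Finset.sum_comm]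
      refine Finset.sum_congr rfl fun l _ => ?_
      rw [Finset.sum_eq_single (⟨((r:ℕ)+(l:ℕ)) % m, Nat.mod_lt _ hm⟩ : Fin m)
          (fun j _ hj => by rw [if_neg (fun h => hj (Fin.ext h.symm)), smul_zero])
          (fun h => absurd (Finset.mem_univ _) h)]
      rw [if_pos rfl]
      congr 1
      refine hmod _ _ ?_
      rw [Nat.mul_mod, Nat.mod_mod_of_dvd _ dvd_rfl, ← Nat.mul_mod]
    rw [hlhs, hrhs]
  · -- counit
    intro σ i
    rw [hg, map_sum]
    simp only [map_smul, D.counit_U]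
    rw [Finset.sum_eq_single (0 : Fin m) (fun p _ hp => by
          have hp' : (p:ℕ) ≠ 0 := fun h => hp (Fin.ext (by rw [h, Fin.val_zero])); simp [hp']) (fun h => absurd (Finset.mem_univ _) h)]
    simp
  · exact linearIndependent_of_top_le_span_of_card_eq_finrank (le_of_eq hspan.symm) hcard
  · exact hspan
end

section
/- Let A = ⊕_{n=0}^{m-1} k^{α^n}G with the Hopf algebra structure of Theorem 1.2. Then A is semisimple as a k-algebra if and only if the characteristic of k does not divide |G|. -/
open TensorProduct

section Aux
variable {k : Type} [Field k] {G : Type} [Group G]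

lemma hopfAux_alpha_symm (α : G → G → kˣ)
    (hcocycle : ∀ σ τ ρ : G, α σ τ * α (σ * τ) ρ = α τ ρ * α σ (τ * ρ))
    (hnorm : ∀ σ : G, α σ 1 = 1 ∧ α 1 σ = 1) (τ : G) :
    α τ τ⁻¹ = α τ⁻¹ τ := by
  have h := hcocycle τ τ⁻¹ τ
  simpa [mul_inv_cancel, inv_mul_cancel, (hnorm τ).1, (hnorm τ).2] using h

lemma hopfAux_key (α : G → G → kˣ)
    (hcocycle : ∀ σ τ ρ : G, α σ τ * α (σ * τ) ρ = α τ ρ * α σ (τ * ρ))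
    (hnorm : ∀ σ : G, α σ 1 = 1 ∧ α 1 σ = 1) (σ τ : G) :
    α ((τ * σ)⁻¹) τ * α σ σ⁻¹ = α τ σ * α (τ * σ) ((τ * σ)⁻¹) := by
  have e1 : σ * (τ * σ)⁻¹ = τ⁻¹ := by group
  have e2 : (τ * σ)⁻¹ * τ = σ⁻¹ := by group
  have h1 := hcocycle τ σ ((τ * σ)⁻¹)
  have h2 := hcocycle σ ((τ * σ)⁻¹) τ
  rw [e1] at h1 h2
  rw [e2] at h2
  calc α ((τ * σ)⁻¹) τ * α σ σ⁻¹ = α σ ((τ * σ)⁻¹) * α τ⁻¹ τ := h2.symm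
    _ = α σ ((τ * σ)⁻¹) * α τ τ⁻¹ := by
        rw [hopfAux_alpha_symm α hcocycle hnorm τ]
    _ = α τ σ * α (τ * σ) ((τ * σ)⁻¹) := h1.symm

lemma hopfAux_skey (α : G → G → kˣ)
    (hcocycle : ∀ σ τ ρ : G, α σ τ * α (σ * τ) ρ = α τ ρ * α σ (τ * ρ))
    (hnorm : ∀ σ : G, α σ 1 = 1 ∧ α 1 σ = 1) (p : ℕ) (σ τ : G) :
    ((α (τ * σ) ((τ * σ)⁻¹)) ^ p)⁻¹ * (α ((τ * σ)⁻¹) τ) ^ p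
      = ((α σ σ⁻¹) ^ p)⁻¹ * (α τ σ) ^ p := by
  have h := congrArg (· ^ p) (hopfAux_key α hcocycle hnorm σ τ)
  simp only [mul_pow] at h
  rw [inv_mul_eq_div, inv_mul_eq_div, div_eq_div_iff_mul_eq_mul]
  exact h

end Aux

/-- Let `A = ⊕_{n=0}^{m-1} k^{αⁿ}G` with the Hopf algebra structure of Theorem 1.2, where
`α` is a normalized 2-cocycle on the finite group `G` whose class has order `m` in
`H²(G,kˣ)`. Then `A` is semisimple as a `k`-algebra if and only if the characteristic of
`k` does not divide `|G|`. -/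
theorem hopfSchur_stmt9 (k : Type) [Field k] (G : Type) [Group G] [Finite G]
    (m : ℕ) (hm : 0 < m) (α : G → G → kˣ) (f : G → kˣ)
    (hcocycle : ∀ σ τ ρ : G, α σ τ * α (σ * τ) ρ = α τ ρ * α σ (τ * ρ))
    (hnorm : ∀ σ : G, α σ 1 = 1 ∧ α 1 σ = 1)
    (hf1 : f 1 = 1)
    (hαf : ∀ σ τ : G, (α σ τ) ^ m = f σ * f τ * (f (σ * τ))⁻¹)
    (horder : ∀ j : ℕ, 0 < j → j < m →
      ¬ ∃ g : G → kˣ, ∀ σ τ : G, (α σ τ) ^ j = g σ * g τ * (g (σ * τ))⁻¹)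
    (D : TwistedSumHopfData k G m α f) :
    IsSemisimpleRing D.A ↔ ¬ (ringChar k ∣ Nat.card G) := by
  classical
  cases nonempty_fintype G
  have hmulmem : ∀ (N : Submodule D.A D.A) (a : D.A) {y : D.A}, y ∈ N → a * y ∈ N := by
    intro N a y hy
    simpa [smul_eq_mul] using N.smul_mem a hy
  constructor
  · -- semisimple → char ∤ |G|
    intro hss hdvd
    have hcardk : ((Nat.card G : k)) = 0 := (ringChar.spec k (Nat.card G)).mpr hdvd
    set n0 : Fin m := ⟨0, hm⟩ with hn0
    set z : D.A := ∑ σ : G, D.U n0 σ with hzdef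
    -- z ≠ 0
    have hz0 : z ≠ 0 := by
      intro h
      have hli := Fintype.linearIndependent_iff.mp D.linIndep
      have hsum : (∑ p : Fin m × G,
          (if p.1 = n0 then (1 : k) else 0) • D.U p.1 p.2) = 0 := by
        rw [Fintype.sum_prod_type]
        calc (∑ n : Fin m, ∑ σ : G,
              (if n = n0 then (1 : k) else 0) • D.U n σ)
            = ∑ n : Fin m, (if n = n0 then (∑ σ : G, D.U n σ) else 0) := by
              refine Finset.sum_congr rfl fun n _ => ?_
              split <;> simp
          _ = ∑ σ : G, D.U n0 σ := by rw [Finset.sum_ite_eq' Finset.univ n0]; simp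
          _ = 0 := h
      have := hli _ hsum (n0, (1 : G))
      simpa using this
    -- multiplication by basis elements
    have hz : ∀ (p : Fin m) (τ : G), D.U p τ * z = if p = n0 then z else 0 := by
      intro p τ
      rw [hzdef, Finset.mul_sum]
      by_cases hp : p = n0
      · subst hp
        rw [if_pos rfl]
        calc (∑ σ : G, D.U n0 τ * D.U n0 σ) = ∑ σ : G, D.U n0 (τ * σ) := by
              refine Finset.sum_congr rfl fun σ _ => ?_
              rw [D.mul_same]
              have hv0 : ((n0 : Fin m) : ℕ) = 0 := rfl
              simp [hv0]
          _ = ∑ σ : G, D.U n0 σ :=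
              Fintype.sum_equiv (Equiv.mulLeft τ) (fun σ => D.U n0 (τ * σ))
                (fun σ => D.U n0 σ) (fun σ => rfl)
      · rw [if_neg hp]
        refine Finset.sum_eq_zero fun σ _ => D.mul_ne p n0 τ σ hp
    have hzz : z * z = 0 := by
      nth_rewrite 1 [hzdef]
      rw [Finset.sum_mul]
      calc (∑ σ : G, D.U n0 σ * z) = ∑ _σ : G, z := by
            refine Finset.sum_congr rfl fun σ _ => ?_
            rw [hz n0 σ, if_pos rfl]
        _ = (Fintype.card G) • z := by simp
        _ = ((Nat.card G : k)) • z := by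
            rw [← Nat.cast_smul_eq_nsmul k, Nat.card_eq_fintype_card]
        _ = 0 := by rw [hcardk, zero_smul]
    -- every element of the left ideal generated by z kills z
    have hle : (⊤ : Submodule k D.A) ≤
        (Submodule.span k {z}).comap (LinearMap.mulRight k z) := by
      rw [← D.span_top, Submodule.span_le]
      rintro y ⟨⟨p, τ⟩, rfl⟩
      simp only [SetLike.mem_coe, Submodule.mem_comap, LinearMap.mulRight_apply]
      rw [hz p τ]
      split
      · exact Submodule.mem_span_singleton_self z
      · exact Submodule.zero_mem _
    have hUz : ∀ a : D.A, a * z ∈ Submodule.span k {z} := fun a => by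
      simpa using hle (Submodule.mem_top (x := a))
    have hzN : ∀ x ∈ Submodule.span D.A {z}, z * x = 0 := by
      intro x hx
      obtain ⟨a, rfl⟩ := Submodule.mem_span_singleton.mp hx
      obtain ⟨c, hc⟩ := Submodule.mem_span_singleton.mp (hUz a)
      rw [smul_eq_mul, ← hc, mul_smul_comm, hzz, smul_zero]
    obtain ⟨N', hc⟩ := exists_isCompl (Submodule.span D.A {z})
    have h1 : (1 : D.A) ∈ Submodule.span D.A {z} ⊔ N' := by
      rw [hc.sup_eq_top]; trivial
    obtain ⟨e, he, e', he', hee⟩ := Submodule.mem_sup.mp h1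
    have hz' : z = z * e' := by
      have h2 : z * (e + e') = z * 1 := by rw [hee]
      rw [mul_add, hzN e he, zero_add, mul_one] at h2
      exact h2.symm
    have hzmem : z ∈ Submodule.span D.A {z} ⊓ N' := by
      refine ⟨Submodule.mem_span_singleton_self z, ?_⟩
      rw [hz']
      exact hmulmem N' z he'
    rw [hc.inf_eq_bot] at hzmem
    exact hz0 hzmem
  · -- char ∤ |G| → semisimple, via averaging (twisted Maschke)
    intro hchar
    have hcardk : ((Nat.card G : k)) ≠ 0 := fun h => hchar ((ringChar.spec k _).mp h)
    have hcardk' : ((Fintype.card G : k)) ≠ 0 := by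
      rwa [Nat.card_eq_fintype_card] at hcardk
    refine { exists_isCompl := fun N => ?_ }
    obtain ⟨q, hq⟩ := Submodule.exists_isCompl (N.restrictScalars k)
    set π : D.A →ₗ[k] D.A :=
      (Submodule.subtype _) ∘ₗ (Submodule.linearProjOfIsCompl _ q hq) with hπdef
    have hπmem : ∀ x, π x ∈ N :=
      fun x => ((Submodule.linearProjOfIsCompl _ q hq) x).2
    have hπid : ∀ x ∈ N, π x = x := by
      intro x hx
      have h := Submodule.linearProjOfIsCompl_apply_left hq
        (⟨x, hx⟩ : N.restrictScalars k)
      have h2 := congrArg (Submodule.subtype (N.restrictScalars k)) h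
      exact h2
    -- the scaled units
    set cu : Fin m → G → kˣ := fun n σ => (α σ σ⁻¹) ^ (n : ℕ) with hcu
    set Φ : D.A →ₗ[k] D.A := (Fintype.card G : k)⁻¹ •
      ∑ n : Fin m, ∑ σ : G,
        (LinearMap.mulLeft k (D.U n σ)) ∘ₗ π ∘ₗ
          ((((cu n σ)⁻¹ : kˣ) : k) • LinearMap.mulLeft k (D.U n σ⁻¹)) with hΦdef
    have hΦapp : ∀ x, Φ x = (Fintype.card G : k)⁻¹ •
        ∑ n : Fin m, ∑ σ : G,
          D.U n σ * π ((((cu n σ)⁻¹ : kˣ) : k) • (D.U n σ⁻¹ * x)) := by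
      intro x
      simp [hΦdef, LinearMap.sum_apply]
    -- values lie in N
    have hmem : ∀ x, Φ x ∈ N := by
      intro x
      rw [hΦapp]
      have : ((Fintype.card G : k)⁻¹ •
          ∑ n : Fin m, ∑ σ : G,
            D.U n σ * π ((((cu n σ)⁻¹ : kˣ) : k) • (D.U n σ⁻¹ * x)))
          ∈ N.restrictScalars k := by
        refine Submodule.smul_mem _ _ (Submodule.sum_mem _ fun n _ =>
          Submodule.sum_mem _ fun σ _ => ?_)
        exact hmulmem N _ (hπmem _)
      exact this
    -- identity on N
    have hid : ∀ x ∈ N, Φ x = x := by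
      intro x hx
      rw [hΦapp]
      have hterm : ∀ (n : Fin m) (σ : G),
          D.U n σ * π ((((cu n σ)⁻¹ : kˣ) : k) • (D.U n σ⁻¹ * x))
            = D.U n 1 * x := by
        intro n σ
        have hIn : ((((cu n σ)⁻¹ : kˣ) : k) • (D.U n σ⁻¹ * x)) ∈ N := by
          have h1 : D.U n σ⁻¹ * x ∈ N := hmulmem N _ hx
          exact Submodule.smul_mem (N.restrictScalars k) _ h1
        rw [hπid _ hIn, mul_smul_comm, ← mul_assoc, D.mul_same, mul_inv_cancel,
          smul_mul_assoc, smul_smul]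
        have hone : (((cu n σ)⁻¹ : kˣ) : k) * (((α σ σ⁻¹ : kˣ) : k) ^ (n : ℕ)) = 1 := by
          have hpow : (((α σ σ⁻¹ : kˣ) : k) ^ (n : ℕ)) = ((cu n σ : kˣ) : k) := by
            simp [hcu]
          rw [hpow, ← Units.val_mul, inv_mul_cancel, Units.val_one]
        rw [hone, one_smul]
      calc ((Fintype.card G : k)⁻¹ •
            ∑ n : Fin m, ∑ σ : G,
              D.U n σ * π ((((cu n σ)⁻¹ : kˣ) : k) • (D.U n σ⁻¹ * x)))
          = (Fintype.card G : k)⁻¹ • ∑ n : Fin m, ∑ _σ : G, D.U n 1 * x := by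
            rw [Finset.sum_congr rfl fun n _ => Finset.sum_congr rfl fun σ _ => hterm n σ]
        _ = (Fintype.card G : k)⁻¹ • ((Fintype.card G : k) • x) := by
            congr 1
            calc (∑ n : Fin m, ∑ _σ : G, D.U n 1 * x)
                = ∑ n : Fin m, (Fintype.card G : k) • (D.U n 1 * x) := by
                  refine Finset.sum_congr rfl fun n _ => ?_
                  rw [Finset.sum_const, Finset.card_univ, Nat.cast_smul_eq_nsmul]
              _ = (Fintype.card G : k) • ((∑ n : Fin m, D.U n 1) * x) := by
                  rw [← Finset.smul_sum, Finset.sum_mul]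
              _ = (Fintype.card G : k) • x := by rw [← D.one_eq, one_mul]
        _ = x := inv_smul_smul₀ hcardk' x
    -- equivariance on generators
    have hgen : ∀ (p : Fin m) (τ : G) (x : D.A),
        Φ (D.U p τ * x) = D.U p τ * Φ x := by
      intro p τ x
      rw [hΦapp, hΦapp, mul_smul_comm, Finset.mul_sum]
      congr 1
      refine Finset.sum_congr rfl fun n _ => ?_
      rw [Finset.mul_sum]
      by_cases hp : n = p
      · subst hp
        refine (Fintype.sum_equiv (Equiv.mulLeft τ)
          (fun σ => D.U n τ * (D.U n σ * π ((((cu n σ)⁻¹ : kˣ) : k) • (D.U n σ⁻¹ * x))))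
          (fun σ => D.U n σ * π ((((cu n σ)⁻¹ : kˣ) : k) • (D.U n σ⁻¹ * (D.U n τ * x))))
          fun σ => ?_).symm
        have e2 : (τ * σ)⁻¹ * τ = σ⁻¹ := by group
        show D.U n τ * (D.U n σ * π ((((cu n σ)⁻¹ : kˣ) : k) • (D.U n σ⁻¹ * x)))
          = D.U n (τ * σ) *
            π ((((cu n (τ * σ))⁻¹ : kˣ) : k) • (D.U n ((τ * σ)⁻¹) * (D.U n τ * x)))
        have hsk : (((cu n (τ * σ))⁻¹ : kˣ) : k) * (((α ((τ * σ)⁻¹) τ : kˣ) : k)) ^ (n : ℕ)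
            = (((cu n σ)⁻¹ : kˣ) : k) * (((α τ σ : kˣ) : k)) ^ (n : ℕ) := by
          exact_mod_cast congrArg Units.val
            (hopfAux_skey α hcocycle hnorm (n : ℕ) σ τ)
        calc D.U n τ * (D.U n σ * π ((((cu n σ)⁻¹ : kˣ) : k) • (D.U n σ⁻¹ * x)))
            = ((((cu n σ)⁻¹ : kˣ) : k) * (((α τ σ : kˣ) : k)) ^ (n : ℕ)) •
                (D.U n (τ * σ) * π (D.U n σ⁻¹ * x)) := by
              rw [← mul_assoc, D.mul_same, map_smul, mul_smul_comm, smul_mul_assoc,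
                smul_smul]
          _ = ((((cu n (τ * σ))⁻¹ : kˣ) : k) * (((α ((τ * σ)⁻¹) τ : kˣ) : k)) ^ (n : ℕ)) •
                (D.U n (τ * σ) * π (D.U n σ⁻¹ * x)) := by
              rw [← hsk]
          _ = D.U n (τ * σ) *
                π ((((cu n (τ * σ))⁻¹ : kˣ) : k) • (D.U n ((τ * σ)⁻¹) * (D.U n τ * x))) := by
              rw [← mul_assoc (D.U n ((τ * σ)⁻¹)), D.mul_same, e2, smul_mul_assoc,
                smul_smul, map_smul, mul_smul_comm]
      · refine Finset.sum_congr rfl fun σ _ => ?_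
        rw [← mul_assoc (D.U n σ⁻¹), D.mul_ne n p σ⁻¹ τ hp, zero_mul, smul_zero,
          map_zero, mul_zero, ← mul_assoc, D.mul_ne p n τ σ (Ne.symm hp), zero_mul]
    -- full equivariance
    have hlin : ∀ (a x : D.A), Φ (a * x) = a * Φ x := by
      intro a x
      have h : (Φ ∘ₗ LinearMap.mulRight k x) = LinearMap.mulRight k (Φ x) := by
        refine LinearMap.ext_on D.span_top ?_
        rintro y ⟨⟨p, τ⟩, rfl⟩
        simpa using hgen p τ x
      simpa using DFunLike.congr_fun h a
    set Pr : D.A →ₗ[D.A] D.A :=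
      { toFun := Φ
        map_add' := Φ.map_add
        map_smul' := fun a y => by simpa [smul_eq_mul] using hlin a y } with hPr
    have hproj : LinearMap.IsProj N Pr := ⟨hmem, hid⟩
    exact ⟨LinearMap.ker Pr, hproj.isCompl⟩
end

section
/- Let L/k be finite Galois with abelian Galois group G, and let E_μ ∈ L ⊗_k L be the primitive idempotent corresponding to the component Ψ_μ (i.e., Ψ_τ(E_μ) = δ_{τ,μ}). Then for every σ ∈ G, (σ ⊗ σ)(E_μ) = E_μ. -/
set_option linter.unnecessarySimpa false


open scoped Classical


open TensorProduct

section Aux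

variable (k L : Type) [Field k] [Field L] [Algebra k L]

/-- The `L`-linear functional on `L ⊗[k] L` (left `L`-module structure) sending
`x ⊗ y` to `x * τ y`. -/
noncomputable def hopfPhi (τ : L ≃ₐ[k] L) : Module.Dual L (L ⊗[k] L) :=
  TensorProduct.AlgebraTensorModule.lift
    (LinearMap.toSpanSingleton L (L →ₗ[k] L) (τ : L →ₗ[k] L))

@[simp] lemma hopfPhi_tmul (τ : L ≃ₐ[k] L) (x y : L) :
    hopfPhi k L τ (x ⊗ₜ[k] y) = x * τ y := by
  simp [hopfPhi, LinearMap.toSpanSingleton, LinearMap.smul_apply, smul_eq_mul]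

lemma hopfPhi_linearIndependent [FiniteDimensional k L] :
    LinearIndependent L (hopfPhi k L) := by
  -- evaluate at `1 ⊗ x` to reduce to Dedekind's independence of characters
  let ev : Module.Dual L (L ⊗[k] L) →ₗ[L] (L → L) :=
    LinearMap.pi fun x : L => LinearMap.applyₗ ((1 : L) ⊗ₜ[k] x)
  have hli : LinearIndependent L (M := L → L)
      (fun τ : L ≃ₐ[k] L => (τ : L → L)) := by
    have := (linearIndependent_monoidHom L L).comp
      (fun τ : L ≃ₐ[k] L => (τ : L →* L))
      (fun a b hab => by
        ext x
        have := congrArg (fun f : L →* L => f x) hab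
        simpa using this)
    exact this
  have key : (ev ∘ hopfPhi k L) = fun τ : L ≃ₐ[k] L => (τ : L → L) := by
    funext τ
    funext x
    simp [ev, LinearMap.applyₗ]
    exact (hopfPhi_tmul k L τ 1 x).trans (one_mul _)
  exact LinearIndependent.of_comp ev (by rw [key]; exact hli)

lemma hopfPhi_injective [FiniteDimensional k L] [IsGalois k L]
    (z : L ⊗[k] L) (hz : ∀ τ : L ≃ₐ[k] L, hopfPhi k L τ z = 0) : z = 0 := by
  haveI : Module.Finite L (L ⊗[k] L) := Module.Finite.base_change k L L
  have hspan : Submodule.span L (Set.range (hopfPhi k L)) = ⊤ := by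
    apply (hopfPhi_linearIndependent k L).span_eq_top_of_card_eq_finrank
    rw [← Nat.card_eq_fintype_card, IsGalois.card_aut_eq_finrank, Subspace.dual_finrank_eq,
      Module.finrank_baseChange]
  have hall : ∀ φ : Module.Dual L (L ⊗[k] L), φ z = 0 := by
    intro φ
    have hφ : φ ∈ Submodule.span L (Set.range (hopfPhi k L)) := by
      rw [hspan]; trivial
    refine Submodule.span_induction ?_ ?_ ?_ ?_ hφ
    · rintro _ ⟨τ, rfl⟩; exact hz τ
    · simp
    · intro f g _ _ hf hg; simp [hf, hg]
    · intro c f _ hf; simp [hf]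
  exact (Module.forall_dual_apply_eq_zero_iff L z).mp hall

end Aux

/-- Let `L/k` be finite Galois with abelian Galois group `G`, `Ψ_σ : L ⊗_k L → L` the
algebra map `x ⊗ y ↦ σ(x)y`, and `E_μ ∈ L ⊗_k L` the idempotent of the corresponding
component (i.e. `Ψ_τ(E_μ) = δ_{τ,μ}`). Then for every `σ ∈ G`, `(σ ⊗ σ)(E_μ) = E_μ`. -/
theorem hopfSchur_stmt11 (k L : Type) [Field k] [Field L] [Algebra k L]
    [FiniteDimensional k L] [IsGalois k L]
    (hab : ∀ σ τ : L ≃ₐ[k] L, σ * τ = τ * σ)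
    (Ψ : (L ≃ₐ[k] L) → ((L ⊗[k] L) →ₐ[k] L))
    (hΨ : ∀ (σ : L ≃ₐ[k] L) (x y : L), Ψ σ (x ⊗ₜ[k] y) = σ x * y)
    (E : (L ≃ₐ[k] L) → L ⊗[k] L)
    (hE : ∀ μ τ : L ≃ₐ[k] L, Ψ τ (E μ) = if τ = μ then 1 else 0)
    (σ μ : L ≃ₐ[k] L) :
    Algebra.TensorProduct.map (σ : L →ₐ[k] L) (σ : L →ₐ[k] L) (E μ) = E μ := by
  set z := Algebra.TensorProduct.map (σ : L →ₐ[k] L) (σ : L →ₐ[k] L) (E μ) - E μ with hzdef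
  -- relate Ψ to hopfPhi via the flip
  have hrel : ∀ (τ : L ≃ₐ[k] L) (w : L ⊗[k] L),
      Ψ τ w = hopfPhi k L τ (TensorProduct.comm k L L w) := by
    intro τ w
    induction w using TensorProduct.induction_on with
    | zero => simp
    | tmul x y => simp [hΨ, mul_comm]
    | add a b ha hb => simp [map_add, ha, hb]
  -- key computation: Ψ τ ∘ (σ ⊗ σ) = σ ∘ Ψ τ
  have hcomm : ∀ (τ : L ≃ₐ[k] L) (w : L ⊗[k] L),
      Ψ τ (Algebra.TensorProduct.map (σ : L →ₐ[k] L) (σ : L →ₐ[k] L) w)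
        = σ (Ψ τ w) := by
    intro τ w
    induction w using TensorProduct.induction_on with
    | zero => simp
    | tmul x y =>
        simp only [Algebra.TensorProduct.map_tmul, hΨ, map_mul]
        have h1 : τ (σ x) = σ (τ x) := by
          have := congrArg (fun f : L ≃ₐ[k] L => f x) (hab τ σ)
          simpa [AlgEquiv.mul_apply] using this
        simp [AlgHom.coe_coe, h1]
    | add a b ha hb => simp [map_add, ha, hb]
  have hz : ∀ τ : L ≃ₐ[k] L, Ψ τ z = 0 := by
    intro τ
    have : Ψ τ z = Ψ τ (Algebra.TensorProduct.map (σ : L →ₐ[k] L) (σ : L →ₐ[k] L) (E μ))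
        - Ψ τ (E μ) := by
      simpa [hzdef] using map_sub (Ψ τ).toLinearMap _ _
    rw [this, hcomm, hE]
    by_cases h : τ = μ <;> simp [h]
  have hz0 : z = 0 := by
    have := hopfPhi_injective k L (TensorProduct.comm k L L z) ?_
    · have := congrArg (TensorProduct.comm k L L).symm this
      simpa using this
    · intro τ
      rw [← hrel]
      exact hz τ
  have := sub_eq_zero.mp hz0
  simpa [hzdef] using this
end

section
/- With H = L ⊕ Fun(G,k) and Δ as defined, the convolution product on D = Hom_{k-alg}(H,L) satisfies: φ_σ * φ_τ = φ_{στ}, φ_σ * ζ_τ = ζ_{στ}, ζ_τ * φ_σ = ζ_{τσ^{-1}}, and ζ_σ * ζ_τ = φ_{τ^{-1}σ}. Consequently (D,*) is a group isomorphic to Z/2Z ⋉ G, where Z/2Z acts on G by inversion. -/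
open TensorProduct
open scoped Classical

section Aux
variable {k L : Type} [Field k] [Field L] [Algebra k L] [Fintype (L ≃ₐ[k] L)]

lemma hs_ext (F G : (L × ((L ≃ₐ[k] L) → k)) →ₗ[k] L)
    (h1 : ∀ x : L, F (x, 0) = G (x, 0))
    (h2 : ∀ ξ : L ≃ₐ[k] L, F ((0:L), Pi.single ξ (1:k)) = G ((0:L), Pi.single ξ (1:k))) :
    F = G := by
  apply LinearMap.ext
  rintro ⟨x, v⟩
  have hv : ((x, v) : L × ((L ≃ₐ[k] L) → k)) =
      (x, 0) + ∑ ξ : L ≃ₐ[k] L, v ξ • (((0:L), Pi.single ξ (1:k)) : L × ((L ≃ₐ[k] L) → k)) := by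
    refine Prod.ext ?_ ?_
    · simp [Prod.fst_sum]
    · funext μ
      simp [Prod.snd_sum, Finset.sum_apply, Pi.single_apply]
  rw [hv, map_add, map_add, h1, map_sum, map_sum]
  congr 1
  refine Finset.sum_congr rfl fun ξ _ => ?_
  rw [map_smul, map_smul, h2]

-- E-term lemmas
lemma hs_mulmap_zero_left (f g : (L × ((L ≃ₐ[k] L) → k)) →ₗ[k] L)
    (hf : ∀ x : L, f (x, 0) = 0) (s : L ⊗[k] L) :
    LinearMap.mul' k L (TensorProduct.map f g
      (TensorProduct.map (LinearMap.inl k L ((L ≃ₐ[k] L) → k))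
        (LinearMap.inl k L ((L ≃ₐ[k] L) → k)) s)) = 0 := by
  induction s using TensorProduct.induction_on with
  | zero => simp
  | tmul x y => simp [TensorProduct.map_tmul, LinearMap.mul'_apply, hf]
  | add a b ha hb => simp [map_add, ha, hb]

lemma hs_mulmap_zero_right (f g : (L × ((L ≃ₐ[k] L) → k)) →ₗ[k] L)
    (hg : ∀ x : L, g (x, 0) = 0) (s : L ⊗[k] L) :
    LinearMap.mul' k L (TensorProduct.map f g
      (TensorProduct.map (LinearMap.inl k L ((L ≃ₐ[k] L) → k))
        (LinearMap.inl k L ((L ≃ₐ[k] L) → k)) s)) = 0 := by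
  induction s using TensorProduct.induction_on with
  | zero => simp
  | tmul x y => simp [TensorProduct.map_tmul, LinearMap.mul'_apply, hg]
  | add a b ha hb => simp [map_add, ha, hb]

lemma hs_mulmap_psi (σ τ : L ≃ₐ[k] L) (Ψ : (L ≃ₐ[k] L) → ((L ⊗[k] L) →ₐ[k] L))
    (hΨ : ∀ (σ : L ≃ₐ[k] L) (x y : L), Ψ σ (x ⊗ₜ[k] y) = σ x * y)
    (f g : (L × ((L ≃ₐ[k] L) → k)) →ₗ[k] L)
    (hf : ∀ x : L, f (x, 0) = σ x) (hg : ∀ x : L, g (x, 0) = τ x) (s : L ⊗[k] L) :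
    LinearMap.mul' k L (TensorProduct.map f g
      (TensorProduct.map (LinearMap.inl k L ((L ≃ₐ[k] L) → k))
        (LinearMap.inl k L ((L ≃ₐ[k] L) → k)) s)) = τ (Ψ (τ⁻¹ * σ) s) := by
  induction s using TensorProduct.induction_on with
  | zero => simp
  | tmul x y =>
      simp only [TensorProduct.map_tmul, LinearMap.inl_apply, LinearMap.mul'_apply, hf, hg,
        hΨ, map_mul]
      congr 1
      have h : τ ((τ⁻¹ * σ) x) = (τ * (τ⁻¹ * σ)) x := rfl
      rw [h, mul_inv_cancel_left]
  | add a b ha hb => simp [map_add, ha, hb]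

end Aux

/-- With `H = L ⊕ Fun(G,k)` and `Δ` as defined in the paper (using the Galois idempotents
`E_ξ` of `L ⊗_k L`), the convolution product `f * g = m_L ∘ (f ⊗ g) ∘ Δ` on
`D = Hom_{k-alg}(H, L)` satisfies `φ_σ * φ_τ = φ_{στ}`, `φ_σ * ζ_τ = ζ_{στ}`,
`ζ_τ * φ_σ = ζ_{τσ⁻¹}` and `ζ_σ * ζ_τ = φ_{τ⁻¹σ}`; consequently `(D,*)` is a group
isomorphic to `ℤ/2ℤ ⋉ G` with `ℤ/2ℤ` acting on `G` by inversion (these four identities are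
precisely the multiplication table of that semidirect product under
`φ_σ ↔ (0,σ)`, `ζ_σ ↔ (1,σ)`). -/
theorem hopfSchur_stmt13 (k L : Type) [Field k] [Field L] [Algebra k L]
    [FiniteDimensional k L] [IsGalois k L] [Fintype (L ≃ₐ[k] L)]
    (hab : ∀ σ τ : L ≃ₐ[k] L, σ * τ = τ * σ)
    (Ψ : (L ≃ₐ[k] L) → ((L ⊗[k] L) →ₐ[k] L))
    (hΨ : ∀ (σ : L ≃ₐ[k] L) (x y : L), Ψ σ (x ⊗ₜ[k] y) = σ x * y)
    (E : (L ≃ₐ[k] L) → L ⊗[k] L)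
    (hE : ∀ μ τ : L ≃ₐ[k] L, Ψ τ (E μ) = if τ = μ then 1 else 0)
    (Δ : (L × ((L ≃ₐ[k] L) → k)) →ₗ[k] ((L × ((L ≃ₐ[k] L) → k)) ⊗[k] (L × ((L ≃ₐ[k] L) → k))))
    (hΔL : ∀ x : L, Δ (x, 0) =
      ∑ μ : L ≃ₐ[k] L,
        ((((μ⁻¹ : L ≃ₐ[k] L) x, 0) ⊗ₜ[k] ((0 : L), Pi.single μ (1 : k))) +
          (((0 : L), Pi.single μ (1 : k)) ⊗ₜ[k] (μ x, 0))))
    (hΔe : ∀ ξ : L ≃ₐ[k] L, Δ ((0 : L), Pi.single ξ (1 : k)) =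
      (∑ σ : L ≃ₐ[k] L,
        (((0 : L), Pi.single σ (1 : k)) ⊗ₜ[k] ((0 : L), Pi.single (σ⁻¹ * ξ) (1 : k)))) +
      TensorProduct.map (LinearMap.inl k L ((L ≃ₐ[k] L) → k))
        (LinearMap.inl k L ((L ≃ₐ[k] L) → k)) (E ξ))
    (conv : ((L × ((L ≃ₐ[k] L) → k)) →ₗ[k] L) → ((L × ((L ≃ₐ[k] L) → k)) →ₗ[k] L) →
      ((L × ((L ≃ₐ[k] L) → k)) →ₗ[k] L))
    (hconv : ∀ f g, conv f g = LinearMap.mul' k L ∘ₗ TensorProduct.map f g ∘ₗ Δ)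
    (φ ζ : (L ≃ₐ[k] L) → ((L × ((L ≃ₐ[k] L) → k)) →ₗ[k] L))
    (hφ : ∀ σ x v, φ σ (x, v) = algebraMap k L (v σ))
    (hζ : ∀ (σ : L ≃ₐ[k] L) (x : L) (v : (L ≃ₐ[k] L) → k), ζ σ (x, v) = σ x) :
    (∀ σ τ : L ≃ₐ[k] L, conv (φ σ) (φ τ) = φ (σ * τ)) ∧
    (∀ σ τ : L ≃ₐ[k] L, conv (φ σ) (ζ τ) = ζ (σ * τ)) ∧
    (∀ σ τ : L ≃ₐ[k] L, conv (ζ τ) (φ σ) = ζ (τ * σ⁻¹)) ∧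
    (∀ σ τ : L ≃ₐ[k] L, conv (ζ σ) (ζ τ) = φ (τ⁻¹ * σ)) := by
  refine ⟨?_, ?_, ?_, ?_⟩ <;> intro σ τ <;> rw [hconv] <;> apply hs_ext
  -- φφ on (x,0)
  · intro x
    simp only [LinearMap.comp_apply]
    rw [hΔL x]
    simp [TensorProduct.map_tmul, LinearMap.mul'_apply, hφ, hζ]
  -- φφ on (0, e ξ)
  · intro ξ
    simp only [LinearMap.comp_apply]
    rw [hΔe ξ, map_add, map_add, map_sum, map_sum,
      hs_mulmap_zero_left (φ σ) (φ τ) (fun x => by simp [hφ]) (E ξ)]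
    simp only [TensorProduct.map_tmul, LinearMap.mul'_apply, hφ, Pi.single_apply, add_zero]
    rw [Finset.sum_eq_single σ]
    · rw [if_pos rfl, map_one, one_mul]
      have hiff : (τ = σ⁻¹ * ξ) ↔ (σ * τ = ξ) := by
        constructor
        · intro h; rw [h]; group
        · intro h; rw [← h]; group
      by_cases h : σ * τ = ξ
      · rw [if_pos (hiff.mpr h), if_pos h]
      · rw [if_neg (fun hh => h (hiff.mp hh)), if_neg h]
    · intro b _ hb
      rw [if_neg (fun hh => hb hh.symm), map_zero, zero_mul]
    · simp
  -- φζ on (x,0)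
  · intro x
    simp only [LinearMap.comp_apply]
    rw [hΔL x]
    simp only [map_sum, map_add, TensorProduct.map_tmul, LinearMap.mul'_apply, hφ, hζ,
      Pi.single_apply]
    simp only [Pi.zero_apply, map_zero, zero_mul, zero_add]
    rw [Finset.sum_eq_single σ]
    · rw [if_pos rfl, map_one, one_mul]
      have : τ (σ x) = (σ * τ) x := by rw [hab σ τ]; rfl
      rw [this]
    · intro b _ hb
      rw [if_neg (fun hh => hb hh.symm), map_zero, zero_mul]
    · simp
  -- φζ on (0, e ξ)
  · intro ξ
    simp only [LinearMap.comp_apply]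
    rw [hΔe ξ, map_add, map_add, map_sum, map_sum,
      hs_mulmap_zero_left (φ σ) (ζ τ) (fun x => by simp [hφ]) (E ξ)]
    simp [TensorProduct.map_tmul, LinearMap.mul'_apply, hφ, hζ]
  -- ζφ on (x,0)
  · intro x
    simp only [LinearMap.comp_apply]
    rw [hΔL x]
    simp only [map_sum, map_add, TensorProduct.map_tmul, LinearMap.mul'_apply, hφ, hζ,
      Pi.single_apply]
    simp only [map_zero, mul_zero, zero_mul, add_zero, zero_add]
    rw [Finset.sum_eq_single σ]
    · rw [if_pos rfl, map_one, mul_one]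
      rfl
    · intro b _ hb
      rw [if_neg (fun hh => hb hh.symm), map_zero, mul_zero]
    · simp
  -- ζφ on (0, e ξ)
  · intro ξ
    simp only [LinearMap.comp_apply]
    rw [hΔe ξ, map_add, map_add, map_sum, map_sum,
      hs_mulmap_zero_right (ζ τ) (φ σ) (fun x => by simp [hφ]) (E ξ)]
    simp [TensorProduct.map_tmul, LinearMap.mul'_apply, hφ, hζ]
  -- ζζ on (x,0)
  · intro x
    simp only [LinearMap.comp_apply]
    rw [hΔL x]
    simp [TensorProduct.map_tmul, LinearMap.mul'_apply, hφ, hζ]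
  -- ζζ on (0, e ξ)
  · intro ξ
    simp only [LinearMap.comp_apply]
    rw [hΔe ξ, map_add, map_add, map_sum, map_sum,
      hs_mulmap_psi σ τ Ψ hΨ (ζ σ) (ζ τ) (fun x => by rw [hζ]) (fun x => by rw [hζ]) (E ξ)]
    simp only [TensorProduct.map_tmul, LinearMap.mul'_apply, hζ, map_zero, zero_mul,
      Finset.sum_const_zero, zero_add, hE, hφ, Pi.single_apply]
    by_cases h : τ⁻¹ * σ = ξ
    · rw [if_pos h, if_pos h, map_one, map_one]
    · rw [if_neg h, if_neg h, map_zero, map_zero]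
end

section
/- With H as in Theorem 1.4, H ⊗_k L is isomorphic as an L-Hopf algebra to Fun(Z/2Z ⋉ G, L), where Z/2Z acts on G by inversion; in particular H is a k-form of Fun(Z/2Z ⋉ G, k). -/
open TensorProduct
open scoped Classical

/-- The data of the Hopf algebra `H = L ⊕ Fun(G,k)` of Theorem 1.4 for a finite abelian
Galois extension `L/k` with group `G`: a commutative semisimple `k`-Hopf algebra of
dimension `2[L:k]`, whose underlying algebra is `L × Fun(G,k)`, with comultiplication
`Δ(x) = Σ_μ (μ⁻¹(x) ⊗ e_μ + e_μ ⊗ μ(x))` for `x ∈ L` and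
`Δ(e_ξ) = Σ_{σμ=ξ} e_σ ⊗ e_μ + E_ξ` (where `E_ξ ∈ L ⊗_k L` is the Galois idempotent),
counit `ε(e_σ) = δ_{σ,1}`, `ε|_L = 0`, and antipode `S|_L = id`, `S(e_σ) = e_{σ⁻¹}`;
moreover `L` is a quotient of `H` via a surjective `k`-algebra map. -/
structure AbelianExtHopfData (k L : Type) [Field k] [Field L] [Algebra k L]
    [FiniteDimensional k L] [IsGalois k L] [Fintype (L ≃ₐ[k] L)]
    (E : (L ≃ₐ[k] L) → L ⊗[k] L) where
  B : Type
  [commRingB : CommRing B]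
  [hopfB : HopfAlgebra k B]
  e : B ≃ₐ[k] (L × ((L ≃ₐ[k] L) → k))
  semisimple : IsSemisimpleRing B
  dim_eq : Module.finrank k B = 2 * Module.finrank k L
  counit_L : ∀ x : L, Coalgebra.counit (R := k) (e.symm (x, 0)) = 0
  counit_e : ∀ σ : L ≃ₐ[k] L,
    Coalgebra.counit (R := k) (e.symm ((0 : L), Pi.single σ (1 : k))) =
      if σ = 1 then (1 : k) else 0
  comul_L : ∀ x : L,
    Coalgebra.comul (R := k) (e.symm (x, 0)) =
      ∑ μ : L ≃ₐ[k] L,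
        (e.symm ((μ⁻¹ : L ≃ₐ[k] L) x, 0) ⊗ₜ[k] e.symm ((0 : L), Pi.single μ (1 : k)) +
          e.symm ((0 : L), Pi.single μ (1 : k)) ⊗ₜ[k] e.symm (μ x, 0))
  comul_e : ∀ ξ : L ≃ₐ[k] L,
    Coalgebra.comul (R := k) (e.symm ((0 : L), Pi.single ξ (1 : k))) =
      (∑ σ : L ≃ₐ[k] L,
        e.symm ((0 : L), Pi.single σ (1 : k)) ⊗ₜ[k]
          e.symm ((0 : L), Pi.single (σ⁻¹ * ξ) (1 : k))) +
      TensorProduct.map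
        (e.symm.toLinearMap ∘ₗ LinearMap.inl k L ((L ≃ₐ[k] L) → k))
        (e.symm.toLinearMap ∘ₗ LinearMap.inl k L ((L ≃ₐ[k] L) → k)) (E ξ)
  antipode_L : ∀ x : L,
    HopfAlgebra.antipode (R := k) (e.symm (x, 0)) = e.symm (x, 0)
  antipode_e : ∀ σ : L ≃ₐ[k] L,
    HopfAlgebra.antipode (R := k) (e.symm ((0 : L), Pi.single σ (1 : k))) =
      e.symm ((0 : L), Pi.single σ⁻¹ (1 : k))
  proj : B →ₐ[k] L
  proj_surjective : Function.Surjective proj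

attribute [instance] AbelianExtHopfData.commRingB AbelianExtHopfData.hopfB

section Aux
variable {k L : Type} [Field k] [Field L] [Algebra k L]
    [FiniteDimensional k L] [IsGalois k L] [Fintype (L ≃ₐ[k] L)]
    {E : (L ≃ₐ[k] L) → L ⊗[k] L} (D : AbelianExtHopfData k L E)

/-- The `L`-points of `H`. -/
noncomputable def hsChi (γ : Bool × (L ≃ₐ[k] L)) : D.B →ₐ[k] L :=
  if γ.1 then
    γ.2.toAlgHom.comp ((AlgHom.fst k L _).comp D.e.toAlgHom)
  else
    (Algebra.ofId k L).comp (((Pi.evalAlgHom k (fun _ => k) γ.2).comp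
      (AlgHom.snd k L _)).comp D.e.toAlgHom)

lemma hsChi_apply_true (σ : L ≃ₐ[k] L) (b : D.B) :
    hsChi D (true, σ) b = σ (D.e b).1 := by simp [hsChi, AlgHom.fst]; rfl

lemma hsChi_apply_false (σ : L ≃ₐ[k] L) (b : D.B) :
    hsChi D (false, σ) b = algebraMap k L ((D.e b).2 σ) := by simp [hsChi, Algebra.ofId, AlgHom.snd]; rfl

lemma hsChi_true_xel (σ : L ≃ₐ[k] L) (x : L) :
    hsChi D (true, σ) (D.e.symm (x, 0)) = σ x := by simp [hsChi_apply_true]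

lemma hsChi_true_e (σ μ : L ≃ₐ[k] L) :
    hsChi D (true, σ) (D.e.symm ((0 : L), Pi.single μ (1 : k))) = 0 := by
  simp [hsChi_apply_true]

lemma hsChi_false_xel (σ : L ≃ₐ[k] L) (x : L) :
    hsChi D (false, σ) (D.e.symm (x, 0)) = 0 := by simp [hsChi_apply_false]

lemma hsChi_false_e (σ μ : L ≃ₐ[k] L) :
    hsChi D (false, σ) (D.e.symm ((0 : L), Pi.single μ (1 : k))) =
      if σ = μ then 1 else 0 := by
  rw [hsChi_apply_false]
  simp only [AlgEquiv.apply_symm_apply, Pi.single_apply]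
  split <;> simp

/-- The base-changed map `L ⊗ H → Fun(Bool × G, L)`. -/
noncomputable def hsPhi : (L ⊗[k] D.B) →ₐ[L] ((Bool × (L ≃ₐ[k] L)) → L) :=
  Algebra.TensorProduct.lift (Pi.constAlgHom L (Bool × (L ≃ₐ[k] L)) L)
    (Pi.algHom _ _ (fun γ => hsChi D γ)) (fun _ _ => Commute.all _ _)

lemma hsPhi_tmul (ℓ : L) (b : D.B) (γ : Bool × (L ≃ₐ[k] L)) :
    hsPhi D (ℓ ⊗ₜ[k] b) γ = ℓ * hsChi D γ b := by
  simp [hsPhi, Algebra.TensorProduct.lift_tmul, Pi.constAlgHom]; left; rfl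


/-- Transport `L ⊗ L` into `L ⊗ B` by `a ⊗ b ↦ b ⊗ e⁻¹(a,0)`. -/
noncomputable def hsF : (L ⊗[k] L) →ₗ[k] (L ⊗[k] D.B) :=
  (TensorProduct.map LinearMap.id
      (D.e.symm.toLinearMap ∘ₗ LinearMap.inl k L ((L ≃ₐ[k] L) → k))) ∘ₗ
    (TensorProduct.comm k L L).toLinearMap

lemma hsPhi_hsF (Ψ : (L ≃ₐ[k] L) → ((L ⊗[k] L) →ₐ[k] L))
    (hΨ : ∀ (σ : L ≃ₐ[k] L) (x y : L), Ψ σ (x ⊗ₜ[k] y) = σ x * y)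
    (t : L ⊗[k] L) (γ : Bool × (L ≃ₐ[k] L)) :
    hsPhi D (hsF D t) γ = if γ.1 then Ψ γ.2 t else 0 := by
  induction t using TensorProduct.induction_on with
  | zero => simp [hsF]
  | tmul a b =>
      obtain ⟨c, τ⟩ := γ
      simp only [hsF, LinearMap.coe_comp, Function.comp_apply, LinearEquiv.coe_coe,
        TensorProduct.comm_tmul, TensorProduct.map_tmul, LinearMap.id_coe, id_eq,
        LinearMap.inl_apply, AlgEquiv.toLinearMap_apply, hsPhi_tmul, hΨ]
      cases c
      · simp [hsChi_false_xel]
      · simp [hsChi_true_xel, mul_comm]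
  | add x y hx hy =>
      simp only [map_add, Pi.add_apply, hx, hy]
      split <;> simp

lemma hsPhi_surjective (Ψ : (L ≃ₐ[k] L) → ((L ⊗[k] L) →ₐ[k] L))
    (hΨ : ∀ (σ : L ≃ₐ[k] L) (x y : L), Ψ σ (x ⊗ₜ[k] y) = σ x * y)
    (hE : ∀ μ τ : L ≃ₐ[k] L, Ψ τ (E μ) = if τ = μ then 1 else 0) :
    Function.Surjective (hsPhi D) := by
  have hsingle : ∀ (γ : Bool × (L ≃ₐ[k] L)) (c : L),
      ∃ z, hsPhi D z = Pi.single γ c := by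
    rintro ⟨b, σ⟩ c
    cases b
    · refine ⟨c ⊗ₜ[k] D.e.symm ((0 : L), Pi.single σ (1 : k)), ?_⟩
      funext γ'
      obtain ⟨d, τ⟩ := γ'
      rw [hsPhi_tmul]
      cases d
      · rw [hsChi_false_e]
        rcases eq_or_ne τ σ with h | h
        · subst h; simp
        · simp [Pi.single_apply, h, Ne.symm h]
      · simp [hsChi_true_e, Pi.single_apply]
    · refine ⟨hsF D (E σ * (1 ⊗ₜ[k] c)), ?_⟩
      funext γ'
      obtain ⟨d, τ⟩ := γ'
      rw [hsPhi_hsF D Ψ hΨ]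
      cases d
      · simp [Pi.single_apply]
      · simp only [if_true, map_mul, hE, hΨ, map_one, one_mul]
        rcases eq_or_ne τ σ with h | h
        · subst h; simp
        · simp [Pi.single_apply, h, Ne.symm h]
  intro f
  have hf : f = ∑ γ : Bool × (L ≃ₐ[k] L), Pi.single γ (f γ) :=
    (Finset.univ_sum_single f).symm
  choose z hz using fun γ : Bool × (L ≃ₐ[k] L) => hsingle γ (f γ)
  exact ⟨∑ γ, z γ, by rw [map_sum]; simp_rw [hz]; exact hf.symm⟩

lemma hs_finiteDimensional : FiniteDimensional k D.B := by
  have h : 0 < Module.finrank k D.B := by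
    rw [D.dim_eq]
    have := Module.finrank_pos (R := k) (M := L)
    omega
  exact Module.finite_of_finrank_pos h

lemma hsPhi_bijective (Ψ : (L ≃ₐ[k] L) → ((L ⊗[k] L) →ₐ[k] L))
    (hΨ : ∀ (σ : L ≃ₐ[k] L) (x y : L), Ψ σ (x ⊗ₜ[k] y) = σ x * y)
    (hE : ∀ μ τ : L ≃ₐ[k] L, Ψ τ (E μ) = if τ = μ then 1 else 0) :
    Function.Bijective (hsPhi D) := by
  have := hs_finiteDimensional D
  have hsurj := hsPhi_surjective D Ψ hΨ hE
  have hrank : Module.finrank L (L ⊗[k] D.B) =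
      Module.finrank L ((Bool × (L ≃ₐ[k] L)) → L) := by
    have hcard : Fintype.card (L ≃ₐ[k] L) = Module.finrank k L := by
      rw [Fintype.card_eq_nat_card, ← IsGalois.card_aut_eq_finrank k L]
    rw [Module.finrank_baseChange, D.dim_eq, Module.finrank_fintype_fun_eq_card,
      Fintype.card_prod, Fintype.card_bool, hcard]
  have hinj : Function.Injective (hsPhi D).toLinearMap :=
    (LinearMap.injective_iff_surjective_of_finrank_eq_finrank hrank).2 hsurj
  exact ⟨hinj, hsurj⟩


lemma hs_decomp (b : D.B) :
    b = D.e.symm ((D.e b).1, 0) +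
      ∑ σ : L ≃ₐ[k] L, (D.e b).2 σ • D.e.symm ((0 : L), Pi.single σ (1 : k)) := by
  apply D.e.injective
  rw [map_add, map_sum]
  simp only [AlgEquiv.apply_symm_apply, map_smul]
  refine Prod.ext ?_ ?_
  · simp [Prod.fst_sum]
  · funext τ
    simp [Prod.snd_sum, Finset.sum_apply, Pi.single_apply, mul_ite]


lemma hsE_tt (σ τ : L ≃ₐ[k] L) (Ψ : (L ≃ₐ[k] L) → ((L ⊗[k] L) →ₐ[k] L))
    (hΨ : ∀ (σ : L ≃ₐ[k] L) (x y : L), Ψ σ (x ⊗ₜ[k] y) = σ x * y) (t : L ⊗[k] L) :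
    LinearMap.mul' k L (TensorProduct.map (hsChi D (true, σ)).toLinearMap
      (hsChi D (true, τ)).toLinearMap
      (TensorProduct.map (D.e.symm.toLinearMap ∘ₗ LinearMap.inl k L ((L ≃ₐ[k] L) → k))
        (D.e.symm.toLinearMap ∘ₗ LinearMap.inl k L ((L ≃ₐ[k] L) → k)) t)) =
      τ (Ψ (τ⁻¹ * σ) t) := by
  induction t using TensorProduct.induction_on with
  | zero => simp
  | tmul a b =>
      simp only [TensorProduct.map_tmul, LinearMap.coe_comp, Function.comp_apply,
        LinearMap.inl_apply, AlgEquiv.toLinearMap_apply, AlgHom.toLinearMap_apply,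
        LinearMap.mul'_apply, hsChi_true_xel, hΨ, map_mul, AlgEquiv.mul_apply]
      rw [show (τ⁻¹ : L ≃ₐ[k] L) = τ.symm from rfl, AlgEquiv.apply_symm_apply]
  | add x y hx hy => simp only [map_add, hx, hy]

lemma hsE_fl (σ : L ≃ₐ[k] L) (g : D.B →ₗ[k] L) (t : L ⊗[k] L) :
    LinearMap.mul' k L (TensorProduct.map (hsChi D (false, σ)).toLinearMap g
      (TensorProduct.map (D.e.symm.toLinearMap ∘ₗ LinearMap.inl k L ((L ≃ₐ[k] L) → k))
        (D.e.symm.toLinearMap ∘ₗ LinearMap.inl k L ((L ≃ₐ[k] L) → k)) t)) = 0 := by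
  induction t using TensorProduct.induction_on with
  | zero => simp
  | tmul a b =>
      simp [TensorProduct.map_tmul, LinearMap.mul'_apply, hsChi_false_xel]
  | add x y hx hy => simp only [map_add, hx, hy, add_zero]

lemma hsE_fr (σ τ : L ≃ₐ[k] L) (t : L ⊗[k] L) :
    LinearMap.mul' k L (TensorProduct.map (hsChi D (true, σ)).toLinearMap
      (hsChi D (false, τ)).toLinearMap
      (TensorProduct.map (D.e.symm.toLinearMap ∘ₗ LinearMap.inl k L ((L ≃ₐ[k] L) → k))
        (D.e.symm.toLinearMap ∘ₗ LinearMap.inl k L ((L ≃ₐ[k] L) → k)) t)) = 0 := by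
  induction t using TensorProduct.induction_on with
  | zero => simp
  | tmul a b =>
      simp [TensorProduct.map_tmul, LinearMap.mul'_apply, hsChi_false_xel]
  | add x y hx hy => simp only [map_add, hx, hy, add_zero]

lemma hsKey_xel (hab : ∀ σ τ : L ≃ₐ[k] L, σ * τ = τ * σ)
    (c d : Bool) (σ τ : L ≃ₐ[k] L) (x : L) :
    hsChi D (xor c d, σ * (if c then τ⁻¹ else τ)) (D.e.symm (x, 0)) =
      LinearMap.mul' k L (TensorProduct.map (hsChi D (c, σ)).toLinearMap
        (hsChi D (d, τ)).toLinearMap (Coalgebra.comul (R := k) (D.e.symm (x, 0)))) := by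
  rw [D.comul_L, map_sum, map_sum]
  simp only [map_add, TensorProduct.map_tmul, LinearMap.mul'_apply,
    AlgHom.toLinearMap_apply]
  cases c <;> cases d
  · simp [hsChi_false_xel, hsChi_false_e]
  · -- c = false, d = true
    simp only [hsChi_false_xel, hsChi_false_e, hsChi_true_xel, hsChi_true_e, zero_mul,
      mul_zero, zero_add, add_zero, ite_mul, one_mul, Finset.sum_ite_eq,
      Finset.mem_univ, if_true]
    show (hsChi D (true, σ * τ)) (D.e.symm (x, 0)) = τ (σ x)
    rw [hsChi_true_xel, hab, AlgEquiv.mul_apply]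
  · -- c = true, d = false
    simp only [Bool.xor_false, Bool.xor_true, if_false, if_true, hsChi_false_xel,
      hsChi_false_e, hsChi_true_xel, hsChi_true_e, zero_mul, mul_zero, zero_add, add_zero,
      mul_ite, mul_one, mul_zero]
    rw [Finset.sum_ite_eq, if_pos (Finset.mem_univ τ), AlgEquiv.mul_apply]
  · simp [hsChi_false_xel, hsChi_true_e]

lemma hsKey_e (hab : ∀ σ τ : L ≃ₐ[k] L, σ * τ = τ * σ)
    (Ψ : (L ≃ₐ[k] L) → ((L ⊗[k] L) →ₐ[k] L))
    (hΨ : ∀ (σ : L ≃ₐ[k] L) (x y : L), Ψ σ (x ⊗ₜ[k] y) = σ x * y)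
    (hE : ∀ μ τ : L ≃ₐ[k] L, Ψ τ (E μ) = if τ = μ then 1 else 0)
    (c d : Bool) (σ τ ξ : L ≃ₐ[k] L) :
    hsChi D (xor c d, σ * (if c then τ⁻¹ else τ))
        (D.e.symm ((0 : L), Pi.single ξ (1 : k))) =
      LinearMap.mul' k L (TensorProduct.map (hsChi D (c, σ)).toLinearMap
        (hsChi D (d, τ)).toLinearMap
        (Coalgebra.comul (R := k) (D.e.symm ((0 : L), Pi.single ξ (1 : k))))) := by
  rw [D.comul_e, map_add, map_add, map_sum, map_sum]
  cases c <;> cases d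
  · -- false false
    rw [hsE_fl]
    simp only [TensorProduct.map_tmul, LinearMap.mul'_apply, AlgHom.toLinearMap_apply,
      hsChi_false_e, ite_mul, one_mul, zero_mul, add_zero, Finset.sum_ite_eq,
      Finset.mem_univ, if_true]
    show (hsChi D (false, σ * τ)) (D.e.symm ((0 : L), Pi.single ξ (1 : k))) = _
    rw [hsChi_false_e]
    refine if_congr ?_ rfl rfl
    exact eq_inv_mul_iff_mul_eq.symm
  · -- false true
    rw [hsE_fl]
    simp [TensorProduct.map_tmul, LinearMap.mul'_apply, hsChi_false_e, hsChi_true_e]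
  · -- true false
    rw [hsE_fr]
    simp [TensorProduct.map_tmul, LinearMap.mul'_apply, hsChi_true_e]
  · -- true true
    rw [hsE_tt D σ τ Ψ hΨ, hE]
    simp only [TensorProduct.map_tmul, LinearMap.mul'_apply, AlgHom.toLinearMap_apply,
      hsChi_true_e, zero_mul, Finset.sum_const_zero, zero_add, apply_ite τ,
      map_one, map_zero]
    show (hsChi D (false, σ * τ⁻¹)) (D.e.symm ((0 : L), Pi.single ξ (1 : k))) = _
    rw [hsChi_false_e]
    refine if_congr ?_ rfl rfl
    rw [hab]


lemma hsKey (hab : ∀ σ τ : L ≃ₐ[k] L, σ * τ = τ * σ)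
    (Ψ : (L ≃ₐ[k] L) → ((L ⊗[k] L) →ₐ[k] L))
    (hΨ : ∀ (σ : L ≃ₐ[k] L) (x y : L), Ψ σ (x ⊗ₜ[k] y) = σ x * y)
    (hE : ∀ μ τ : L ≃ₐ[k] L, Ψ τ (E μ) = if τ = μ then 1 else 0)
    (γ δ : Bool × (L ≃ₐ[k] L)) (b : D.B) :
    hsChi D (xor γ.1 δ.1, γ.2 * (if γ.1 then δ.2⁻¹ else δ.2)) b =
      LinearMap.mul' k L (TensorProduct.map (hsChi D γ).toLinearMap
        (hsChi D δ).toLinearMap (Coalgebra.comul (R := k) b)) := by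
  obtain ⟨c, σ⟩ := γ; obtain ⟨d, τ⟩ := δ
  conv_lhs => rw [hs_decomp D b]
  conv_rhs => rw [hs_decomp D b]
  simp only [map_add, map_sum, map_smul]
  rw [hsKey_xel D hab c d σ τ]
  congr 1
  refine Finset.sum_congr rfl fun ρ _ => ?_
  rw [hsKey_e D hab Ψ hΨ hE c d σ τ ρ]

lemma hsCounit (b : D.B) :
    hsChi D (false, 1) b = algebraMap k L (Coalgebra.counit (R := k) b) := by
  conv_lhs => rw [hs_decomp D b]
  conv_rhs => rw [hs_decomp D b]
  simp only [map_add, map_sum, map_smul, hsChi_false_xel, hsChi_false_e,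
    D.counit_L, D.counit_e, map_zero, zero_add, smul_eq_mul, mul_ite, mul_one, mul_zero,
    Algebra.algebraMap_self]
  refine Finset.sum_congr rfl fun ρ _ => ?_
  rw [apply_ite (algebraMap k L), map_zero, smul_ite, smul_zero,
    Algebra.algebraMap_eq_smul_one]
  exact if_congr eq_comm rfl rfl

end Aux

/-- Theorem 1.4 (2): with `H` as in Theorem 1.4, `H ⊗_k L` is isomorphic as an `L`-Hopf
algebra to `Fun(ℤ/2ℤ ⋉ G, L)`, where `ℤ/2ℤ` acts on `G` by inversion; in particular `H` is
a `k`-form of `Fun(ℤ/2ℤ ⋉ G, k)`. The semidirect product is realized on `Bool × G` with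
multiplication `(b,σ)(c,τ) = (b+c, σ·(τ⁻¹ if b else τ))`, and "Hopf algebra isomorphism"
is expressed by: `Φ` is an `L`-algebra isomorphism `L ⊗_k H ≅ Fun(Bool × G, L)` such that
the `L`-points `χ_γ = ev_γ ∘ Φ ∘ (1 ⊗ -)` satisfy `χ_{γδ} = (χ_γ ⊗ χ_δ) ∘ Δ_H`
(convolution) and `χ_{(0,1)} = η_L ∘ ε_H`, i.e. `Φ` intertwines the comultiplications and
counits. -/
theorem hopfSchur_stmt15 (k L : Type) [Field k] [Field L] [Algebra k L]
    [FiniteDimensional k L] [IsGalois k L] [Fintype (L ≃ₐ[k] L)]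
    (hab : ∀ σ τ : L ≃ₐ[k] L, σ * τ = τ * σ)
    (Ψ : (L ≃ₐ[k] L) → ((L ⊗[k] L) →ₐ[k] L))
    (hΨ : ∀ (σ : L ≃ₐ[k] L) (x y : L), Ψ σ (x ⊗ₜ[k] y) = σ x * y)
    (E : (L ≃ₐ[k] L) → L ⊗[k] L)
    (hE : ∀ μ τ : L ≃ₐ[k] L, Ψ τ (E μ) = if τ = μ then 1 else 0)
    (D : AbelianExtHopfData k L E)
    (mulΓ : (Bool × (L ≃ₐ[k] L)) → (Bool × (L ≃ₐ[k] L)) → (Bool × (L ≃ₐ[k] L)))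
    (hmulΓ : ∀ p q, mulΓ p q = (xor p.1 q.1, p.2 * (if p.1 then q.2⁻¹ else q.2))) :
    ∃ Φ : (L ⊗[k] D.B) ≃ₐ[L] ((Bool × (L ≃ₐ[k] L)) → L),
      (∀ γ δ : Bool × (L ≃ₐ[k] L), ∀ b : D.B,
        Φ ((1 : L) ⊗ₜ[k] b) (mulΓ γ δ) =
          LinearMap.mul' k L
            (TensorProduct.map
              ((LinearMap.proj (R := L) γ).restrictScalars k ∘ₗ
                (Φ.toLinearMap.restrictScalars k) ∘ₗ (TensorProduct.mk k L D.B 1))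
              ((LinearMap.proj (R := L) δ).restrictScalars k ∘ₗ
                (Φ.toLinearMap.restrictScalars k) ∘ₗ (TensorProduct.mk k L D.B 1))
              (Coalgebra.comul (R := k) b))) ∧
      (∀ b : D.B,
        Φ ((1 : L) ⊗ₜ[k] b) (false, 1) = algebraMap k L (Coalgebra.counit (R := k) b)) := by
  classical
  have hbij := hsPhi_bijective D Ψ hΨ hE
  refine ⟨AlgEquiv.ofBijective (hsPhi D) hbij, ?_, ?_⟩
  · intro γ δ b
    have hF : ∀ γ' : Bool × (L ≃ₐ[k] L),
        ((LinearMap.proj (R := L) γ').restrictScalars k ∘ₗ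
          ((AlgEquiv.ofBijective (hsPhi D) hbij).toLinearMap.restrictScalars k) ∘ₗ
          (TensorProduct.mk k L D.B 1)) = (hsChi D γ').toLinearMap := by
      intro γ'
      ext b'
      simp only [LinearMap.coe_comp, Function.comp_apply, TensorProduct.mk_apply,
        LinearMap.coe_restrictScalars, AlgEquiv.toLinearMap_apply,
        AlgEquiv.coe_ofBijective, LinearMap.proj_apply, AlgHom.toLinearMap_apply,
        hsPhi_tmul, one_mul]
    rw [hF, hF, hmulΓ]
    have hLHS : (AlgEquiv.ofBijective (hsPhi D) hbij) ((1 : L) ⊗ₜ[k] b)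
        (xor γ.1 δ.1, γ.2 * (if γ.1 then δ.2⁻¹ else δ.2)) =
        hsChi D (xor γ.1 δ.1, γ.2 * (if γ.1 then δ.2⁻¹ else δ.2)) b := by
      rw [AlgEquiv.coe_ofBijective, hsPhi_tmul, one_mul]
    rw [hLHS]
    exact hsKey D hab Ψ hΨ hE γ δ b
  · intro b
    have hLHS : (AlgEquiv.ofBijective (hsPhi D) hbij) ((1 : L) ⊗ₜ[k] b) (false, 1) =
        hsChi D (false, 1) b := by
      rw [AlgEquiv.coe_ofBijective, hsPhi_tmul, one_mul]
    rw [hLHS]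
    exact hsCounit D b
end

section
/- Let G be a cyclic group of order n generated by σ, k a field, and β ∈ Z^2(G,k*) any 2-cocycle with values in L* where L/k is a cyclic Galois extension with group G. Then β is cohomologous (in Z^2(G,L*)) to a 2-cocycle with values in k* of the form β(σ^i, σ^j) = 1 if i+j < n and b if i+j ≥ n (0 ≤ i,j < n) for some b ∈ k*. -/
noncomputable def hopfSchurCSeq {k L : Type} [Field k] [Field L] [Algebra k L]
    (σ : L ≃ₐ[k] L) (β : (L ≃ₐ[k] L) → (L ≃ₐ[k] L) → Lˣ) : ℕ → L
  | 0 => 1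
  | (i+1) => ((β σ (σ ^ i) : Lˣ) : L) * σ (hopfSchurCSeq σ β i) / σ ((β 1 1 : Lˣ) : L)

/-- Let `L/k` be a cyclic Galois extension of degree `n` with Galois group `G = ⟨σ⟩`, and
`β ∈ Z²(G, Lˣ)` any 2-cocycle (for the Galois action of `G` on `Lˣ`). Then `β` is
cohomologous in `Z²(G, Lˣ)` to a 2-cocycle with values in `kˣ` of the form
`(σⁱ,σʲ) ↦ 1` if `i+j < n` and `↦ b` if `i+j ≥ n` (`0 ≤ i,j < n`), for some `b ∈ kˣ`. -/
theorem hopfSchur_stmt16 (k L : Type) [Field k] [Field L] [Algebra k L]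
    [FiniteDimensional k L] [IsGalois k L]
    (n : ℕ) (hn : Nat.card (L ≃ₐ[k] L) = n)
    (σ : L ≃ₐ[k] L) (hgen : ∀ τ : L ≃ₐ[k] L, ∃ i : ℕ, σ ^ i = τ)
    (β : (L ≃ₐ[k] L) → (L ≃ₐ[k] L) → Lˣ)
    (hcocycle : ∀ σ₁ σ₂ σ₃ : L ≃ₐ[k] L,
      σ₁ ((β σ₂ σ₃ : Lˣ) : L) * ((β σ₁ (σ₂ * σ₃) : Lˣ) : L) =
        ((β (σ₁ * σ₂) σ₃ : Lˣ) : L) * ((β σ₁ σ₂ : Lˣ) : L)) :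
    ∃ (g : (L ≃ₐ[k] L) → Lˣ) (b : kˣ),
      ∀ i j : ℕ, i < n → j < n →
        ((β (σ ^ i) (σ ^ j) : Lˣ) : L) * (σ ^ i) ((g (σ ^ j) : Lˣ) : L) *
            ((g (σ ^ i) : Lˣ) : L) / ((g (σ ^ i * σ ^ j) : Lˣ) : L) =
          (if i + j < n then 1 else algebraMap k L ((b : kˣ) : k)) := by
  classical
  set B : (L ≃ₐ[k] L) → (L ≃ₐ[k] L) → L := fun τ ρ => ((β τ ρ : Lˣ) : L) with hBdef
  have hB0 : ∀ τ ρ, B τ ρ ≠ 0 := fun τ ρ => Units.ne_zero _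
  set e : L := B 1 1 with hedef
  have he : e ≠ 0 := hB0 1 1
  have hmapne : ∀ (τ : L ≃ₐ[k] L) (x : L), x ≠ 0 → τ x ≠ 0 := by
    intro τ x hx
    exact (map_ne_zero_iff τ τ.injective).mpr hx
  -- normalization facts
  have hnorm1 : ∀ τ : L ≃ₐ[k] L, B 1 τ = e := by
    intro τ
    have h := hcocycle 1 1 τ
    simp only [one_mul, AlgEquiv.one_apply] at h
    exact mul_left_cancel₀ (hB0 1 τ) h
  have hnormr : ∀ τ : L ≃ₐ[k] L, B τ 1 = τ e := by
    intro τ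
    have h := hcocycle τ 1 1
    simp only [mul_one, one_mul] at h
    exact (mul_right_cancel₀ (hB0 τ 1) h).symm
  set c : ℕ → L := hopfSchurCSeq σ β with hcdef
  have hcsucc : ∀ i : ℕ, c (i + 1) = B σ (σ ^ i) * σ (c i) / σ e := fun i => rfl
  have hc0 : ∀ m, c m ≠ 0 := by
    intro m
    induction m with
    | zero => exact one_ne_zero
    | succ i ih =>
      rw [hcsucc]
      exact div_ne_zero (mul_ne_zero (hB0 _ _) (hmapne _ _ ih)) (hmapne _ _ he)
  have hc1 : c 1 = 1 := by
    rw [hcsucc, pow_zero, hnormr]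
    show σ e * σ (1 : L) / σ e = 1
    rw [map_one, mul_one, div_self (hmapne _ _ he)]
  -- the master identity
  have master : ∀ i j : ℕ, B (σ ^ i) (σ ^ j) / (σ ^ i) e * (σ ^ i) (c j) * c i = c (i + j) := by
    intro i
    induction i with
    | zero =>
      intro j
      simp only [pow_zero, AlgEquiv.one_apply, hnorm1, zero_add]
      rw [div_self he]
      show 1 * c j * c 0 = c j
      show 1 * c j * 1 = c j
      ring
    | succ i ih =>
      intro j
      have hco := hcocycle σ (σ ^ i) (σ ^ j)
      rw [← pow_succ' σ i, ← pow_add] at hco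
      -- hco : σ (B (σ^i) (σ^j)) * B σ (σ^(i+j)) = B (σ^(i+1)) (σ^j) * B σ (σ^i)
      have hcomp : ∀ x : L, σ ((σ ^ i) x) = (σ ^ (i + 1)) x := by
        intro x; rw [pow_succ']; rfl
      have hij := congrArg σ (ih j)
      simp only [map_mul, map_div₀, hcomp] at hij
      have hBtop : B (σ ^ (i + 1)) (σ ^ j) =
          σ (B (σ ^ i) (σ ^ j)) * B σ (σ ^ (i + j)) / B σ (σ ^ i) := by
        rw [eq_div_iff (hB0 σ (σ ^ i))]
        linear_combination hco.symm
      rw [show i + 1 + j = (i + j) + 1 by omega, hcsucc, hcsucc, hBtop, ← hij]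
      have h1 : (σ ^ (i + 1)) e ≠ 0 := hmapne _ _ he
      have h2 : σ e ≠ 0 := hmapne _ _ he
      have h3 : B σ (σ ^ i) ≠ 0 := hB0 _ _
      field_simp
  -- σ has order n, σ ^ n = 1
  have hfin : Finite (L ≃ₐ[k] L) := inferInstance
  have hσn : σ ^ n = 1 := by rw [← hn]; exact pow_card_eq_one'
  have hnpos : 0 < n := by
    rw [← hn]; exact Nat.card_pos
  have hord : orderOf σ = n := by
    have hz : ∀ g : L ≃ₐ[k] L, g ∈ Subgroup.zpowers σ := by
      intro g; obtain ⟨i, hi⟩ := hgen g; exact ⟨i, by simpa using hi⟩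
    have := orderOf_eq_card_of_forall_mem_zpowers hz
    rw [this, ← hn, Nat.card_eq_fintype_card]
  have hinj : ∀ a b : ℕ, a < n → b < n → σ ^ a = σ ^ b → a = b := by
    intro a b ha hb hab
    have h := pow_eq_pow_iff_modEq.mp hab
    rw [hord] at h
    have h' : a % n = b % n := h
    rwa [Nat.mod_eq_of_lt ha, Nat.mod_eq_of_lt hb] at h'
  -- b := c n is fixed by the Galois group
  have hcn1 : c (n + 1) = σ (c n) := by
    rw [hcsucc, hσn, hnormr, mul_comm, mul_div_assoc, div_self (hmapne _ _ he), mul_one]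
  have hshift : ∀ m, c (n + m) = c m * c n := by
    intro m
    have h := master n m
    simp only [hσn, AlgEquiv.one_apply, hnorm1] at h
    rw [div_self he, one_mul] at h
    exact h.symm
  have hfixσ : σ (c n) = c n := by
    have h2 := hshift 1
    rw [hc1, one_mul] at h2
    exact hcn1.symm.trans h2
  have hfix : ∀ τ : L ≃ₐ[k] L, τ (c n) = c n := by
    have hp : ∀ m : ℕ, (σ ^ m) (c n) = c n := by
      intro m
      induction m with
      | zero => simp
      | succ m ih =>
        rw [pow_succ]
        show (σ ^ m) (σ (c n)) = c n
        rw [hfixσ, ih]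
    intro τ
    obtain ⟨m, hm⟩ := hgen τ
    rw [← hm]; exact hp m
  obtain ⟨bk, hbk⟩ : ∃ y : k, algebraMap k L y = c n := by
    have hmem : c n ∈ IntermediateField.fixedField
        (IntermediateField.fixingSubgroup (⊥ : IntermediateField k L)) := by
      rw [IntermediateField.fixingSubgroup_bot]
      intro gg
      exact hfix gg
    rw [IsGalois.fixedField_fixingSubgroup] at hmem
    exact IntermediateField.mem_bot.mp hmem
  have hbk0 : bk ≠ 0 := by
    intro h0
    exact hc0 n (by rw [← hbk, h0, map_zero])
  set g : (L ≃ₐ[k] L) → Lˣ :=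
    fun τ => Units.mk0 (c (Nat.find (hgen τ) % n) / e) (div_ne_zero (hc0 _) he) with hgdef
  refine ⟨g, Units.mk0 bk hbk0, ?_⟩
  intro i j hi hj
  have hgval : ∀ m : ℕ, m < n → ((g (σ ^ m) : Lˣ) : L) = c m / e := by
    intro m hm
    have hfm : σ ^ (Nat.find (hgen (σ ^ m))) = σ ^ m := Nat.find_spec (hgen (σ ^ m))
    have hmod : σ ^ (Nat.find (hgen (σ ^ m)) % n) = σ ^ m := by
      conv_rhs => rw [← hfm, ← Nat.div_add_mod (Nat.find (hgen (σ ^ m))) n]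
      rw [pow_add, pow_mul, hσn, one_pow, one_mul]
    have heq := hinj _ _ (Nat.mod_lt _ hnpos) hm hmod
    show c (Nat.find (hgen (σ ^ m)) % n) / e = c m / e
    rw [heq]
  have hpowmod : σ ^ i * σ ^ j = σ ^ ((i + j) % n) := by
    rw [← pow_add]
    conv_lhs => rw [← Nat.div_add_mod (i + j) n]
    rw [pow_add, pow_mul, hσn, one_pow, one_mul]
  have hgij : ((g (σ ^ i * σ ^ j) : Lˣ) : L) = c ((i + j) % n) / e := by
    rw [hpowmod]; exact hgval _ (Nat.mod_lt _ hnpos)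
  rw [hgval i hi, hgval j hj, hgij, map_div₀]
  have hmij := master i j
  rw [div_mul_eq_mul_div, div_mul_eq_mul_div, div_eq_iff (hmapne _ _ he)] at hmij
  -- hmij : B (σ^i) (σ^j) * (σ^i) (c j) * c i = c (i+j) * (σ^i) e
  have h1 : (σ ^ i) e ≠ 0 := hmapne _ _ he
  have h2 : (σ ^ i) (c j) ≠ 0 := hmapne _ _ (hc0 j)
  have h3 : c (i + j) ≠ 0 := hc0 _
  have h4 : c i ≠ 0 := hc0 i
  have h5 : c (i + j - n) ≠ 0 := hc0 _
  have h6 : c n ≠ 0 := hc0 n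
  by_cases hlt : i + j < n
  · rw [if_pos hlt, Nat.mod_eq_of_lt hlt]
    field_simp
    linear_combination hmij
  · rw [if_neg hlt]
    push_neg at hlt
    rw [Nat.mod_eq_sub_mod hlt, Nat.mod_eq_of_lt (by omega)]
    have hsh := hshift (i + j - n)
    rw [show n + (i + j - n) = i + j by omega] at hsh
    rw [hsh] at hmij
    show _ = algebraMap k L bk
    rw [hbk]
    field_simp
    linear_combination hmij
end
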